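/- Let β, m > 0 and let v ∈ L²(∂Ω) be strictly bounded below by its critical constant on all of ∂Ω, i.e. v ≥ c_v on ∂Ω where c_v (|∂Ω| + βm) = ∫_{∂Ω} v dH^{N−1}. Then the minimal boundary energy of the optimal-insulation functional equals min_{ĥ ∈ H_m(∂Ω)} ∫_{∂Ω} v²/(1+βĥ) dH^{N−1} = (1/(|∂Ω| + βm)) ( ∫_{∂Ω} v dH^{N−1} )². -/

import Mathlib

open MeasureTheory Set Filter
open scoped RealInnerProductSpace ENNReal Topology
noncomputable section

abbrev Euc (N : ℕ) := EuclideanSpace ℝ (Fin N)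

/-- The (N-1)-dimensional Hausdorff (surface) measure on the boundary of `Ω`. -/
def sm (N : ℕ) (Ω : Set (Euc N)) : Measure (Euc N) :=
  (μH[(N : ℝ) - 1]).restrict (frontier Ω)

/-- Membership in `H¹(Ω)` (concrete model: function and gradient square integrable). -/
def MemH1 {N : ℕ} (Ω : Set (Euc N)) (v : Euc N → ℝ) : Prop :=
  MemLp v 2 (volume.restrict Ω) ∧ MemLp (fun x => gradient v x) 2 (volume.restrict Ω)

/-- Dirichlet energy `∫_Ω |∇v|²`. -/
def dirE {N : ℕ} (Ω : Set (Euc N)) (v : Euc N → ℝ) : ℝ := ∫ x in Ω, ‖gradient v x‖ ^ 2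

/-- Boundary energy `∫_{∂Ω} v²/(1+βh)`. -/
def bdryE {N : ℕ} (Ω : Set (Euc N)) (β : ℝ) (v h : Euc N → ℝ) : ℝ :=
  ∫ σ, v σ ^ 2 / (1 + β * h σ) ∂(sm N Ω)

/-- The insulation functional `J(v,h)`. -/
def Jfun {N : ℕ} (Ω : Set (Euc N)) (β : ℝ) (v h : Euc N → ℝ) : ℝ :=
  dirE Ω v + β * bdryE Ω β v h

/-- The Rayleigh quotient `F(v,h)`. -/
def Rq {N : ℕ} (Ω : Set (Euc N)) (β : ℝ) (v h : Euc N → ℝ) : ℝ :=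
  Jfun Ω β v h / ∫ x in Ω, v x ^ 2

/-- `h ∈ H_m(∂Ω)`: nonnegative, integrable on `∂Ω`, with total mass `m`. -/
def memHm {N : ℕ} (Ω : Set (Euc N)) (m : ℝ) (h : Euc N → ℝ) : Prop :=
  (∀ σ, 0 ≤ h σ) ∧ Integrable h (sm N Ω) ∧ (∫ σ, h σ ∂(sm N Ω)) = m

/-- The optimal insulation eigenvalue `λ_m`. -/
def lam {N : ℕ} (Ω : Set (Euc N)) (β m : ℝ) : ℝ :=
  sInf {t | ∃ v h, MemH1 Ω v ∧ ¬ v =ᵐ[volume.restrict Ω] 0 ∧ memHm Ω m h ∧ t = Rq Ω β v h}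

/-- The first Robin eigenvalue `λ^R(β)`. -/
def lamR {N : ℕ} (Ω : Set (Euc N)) (β : ℝ) : ℝ :=
  sInf {t | ∃ v, MemH1 Ω v ∧ ¬ v =ᵐ[volume.restrict Ω] 0 ∧
    t = (dirE Ω v + β * ∫ σ, v σ ^ 2 ∂(sm N Ω)) / ∫ x in Ω, v x ^ 2}

/-- The first nontrivial Neumann eigenvalue `λ^N`. -/
def lamN {N : ℕ} (Ω : Set (Euc N)) : ℝ :=
  sInf {t | ∃ v, MemH1 Ω v ∧ ¬ v =ᵐ[volume.restrict Ω] 0 ∧ (∫ x in Ω, v x) = 0 ∧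
    t = dirE Ω v / ∫ x in Ω, v x ^ 2}

/-- The first Dirichlet eigenvalue `λ^D`. -/
def lamD {N : ℕ} (Ω : Set (Euc N)) : ℝ :=
  sInf {t | ∃ v, MemH1 Ω v ∧ ¬ v =ᵐ[volume.restrict Ω] 0 ∧ (∀ σ ∈ frontier Ω, v σ = 0) ∧
    t = dirE Ω v / ∫ x in Ω, v x ^ 2}

/-- Radial function about the center `x0`. -/
def IsRadial {N : ℕ} (x0 : Euc N) (u : Euc N → ℝ) : Prop :=
  ∀ x y, ‖x - x0‖ = ‖y - x0‖ → u x = u y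

/-! For `b > 0` one has `v² / b ≥ 2cv - c²b`, with equality iff `v = cb`. Taking `b = 1 + βg` and
integrating over `∂Ω`, where `∫ (1 + βg) = |∂Ω| + βm`, bounds the energy below by
`2c ∫ v - c² (|∂Ω| + βm) = c ∫ v` for every admissible `g`. Equality holds for
`g = (v - c) / (cβ)`, which is nonnegative because `v ≥ c` on `∂Ω` and has mass `m` by the
choice of `c`; finally `c ∫ v = (∫ v)² / (|∂Ω| + βm)`. -/

section

variable {α : Type*} [MeasurableSpace α] {μ : Measure α}

theorem MeasureTheory.MemLp.isFiniteMeasure_of_ae_le {p : ℝ≥0∞} {v : α → ℝ} {c : ℝ}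
    (hv : MemLp v p μ) (hp₀ : p ≠ 0) (hp : p ≠ ∞) (hc : 0 < c) (hvc : ∀ᵐ x ∂μ, c ≤ v x) :
    IsFiniteMeasure μ := by
  refine ⟨(measure_mono_ae ?_).trans_lt
    (hv.meas_ge_lt_top hp₀ hp (ε := c.toNNReal) (by simpa using hc))⟩
  filter_upwards [hvc] with x hx _
  show c.toNNReal ≤ ‖v x‖₊
  rw [Real.toNNReal_le_iff_le_coe, coe_nnnorm, Real.norm_eq_abs]
  exact hx.trans (le_abs_self _)

theorem two_mul_mul_sub_sq_mul_le_sq_div (c : ℝ) {v b : ℝ} (hb : 0 < b) :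
    2 * c * v - c ^ 2 * b ≤ v ^ 2 / b := by
  rw [le_div_iff₀ hb]
  nlinarith [sq_nonneg (v - c * b)]

theorem MeasureTheory.MemLp.integrable_sq_div_one_add_mul {v g : α → ℝ} {β : ℝ}
    (hv : MemLp v 2 μ) (hg : AEMeasurable g μ) (hβ : 0 ≤ β) (hg₀ : ∀ x, 0 ≤ g x) :
    Integrable (fun x => v x ^ 2 / (1 + β * g x)) μ := by
  refine hv.integrable_sq.mono
    ((hv.aestronglyMeasurable.aemeasurable.pow_const 2).div
      (aemeasurable_const.add (hg.const_mul β))).aestronglyMeasurable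
    (ae_of_all _ fun x => ?_)
  have hb : 1 ≤ 1 + β * g x := le_add_of_nonneg_right (mul_nonneg hβ (hg₀ x))
  rw [norm_div, Real.norm_of_nonneg (zero_le_one.trans hb)]
  exact div_le_self (norm_nonneg _) hb

theorem integral_sq_div_one_add_mul_ge [IsFiniteMeasure μ] (c : ℝ) {v g : α → ℝ} {β : ℝ}
    (hv : MemLp v 2 μ) (hg : Integrable g μ) (hβ : 0 ≤ β) (hg₀ : ∀ x, 0 ≤ g x) :
    2 * c * ∫ x, v x ∂μ - c ^ 2 * (μ.real univ + β * ∫ x, g x ∂μ) ≤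
      ∫ x, v x ^ 2 / (1 + β * g x) ∂μ := by
  have hden : Integrable (fun x => 1 + β * g x) μ := (integrable_const 1).add (hg.const_mul β)
  have hv₁ : Integrable v μ := hv.integrable one_le_two
  calc 2 * c * ∫ x, v x ∂μ - c ^ 2 * (μ.real univ + β * ∫ x, g x ∂μ)
      = ∫ x, 2 * c * v x - c ^ 2 * (1 + β * g x) ∂μ := by
        rw [integral_sub (hv₁.const_mul _) (hden.const_mul _), integral_const_mul,
          integral_const_mul, integral_add (integrable_const 1) (hg.const_mul β),
          integral_const_mul, integral_const, smul_eq_mul, mul_one]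
    _ ≤ ∫ x, v x ^ 2 / (1 + β * g x) ∂μ :=
        integral_mono ((hv₁.const_mul _).sub (hden.const_mul _))
          (hv.integrable_sq_div_one_add_mul hg.aemeasurable hβ hg₀)
          fun x => two_mul_mul_sub_sq_mul_le_sq_div c
            (add_pos_of_pos_of_nonneg one_pos (mul_nonneg hβ (hg₀ x)))

theorem isLeast_integral_sq_div_one_add_mul {v : α → ℝ} {β c m : ℝ} (hv : MemLp v 2 μ)
    (hβ : 0 < β) (hc : 0 < c) (hvc : ∀ᵐ x ∂μ, c ≤ v x)
    (hceq : c * (μ.real univ + β * m) = ∫ x, v x ∂μ) :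
    IsLeast {t | ∃ g : α → ℝ, (∀ x, 0 ≤ g x) ∧ Integrable g μ ∧ (∫ x, g x ∂μ) = m ∧
        t = ∫ x, v x ^ 2 / (1 + β * g x) ∂μ} (c * ∫ x, v x ∂μ) := by
  have := hv.isFiniteMeasure_of_ae_le two_ne_zero ENNReal.ofNat_ne_top hc hvc
  have hv₁ : Integrable v μ := hv.integrable one_le_two
  set g₀ : α → ℝ := fun x => max ((v x - c) / (c * β)) 0
  have hg₀ : ∀ᵐ x ∂μ, g₀ x = (v x - c) / (c * β) := by
    filter_upwards [hvc] with x hx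
    exact max_eq_left (div_nonneg (sub_nonneg.2 hx) (by positivity))
  refine ⟨⟨g₀, fun x => le_max_right _ _, ((hv₁.sub (integrable_const c)).div_const _).pos_part,
    ?mass, ?energy⟩, ?lower⟩
  case mass =>
    rw [integral_congr_ae hg₀, integral_div, integral_sub hv₁ (integrable_const c),
      integral_const, smul_eq_mul, ← hceq]
    field_simp
    ring
  case energy =>
    rw [← integral_const_mul]
    refine integral_congr_ae ?_
    filter_upwards [hvc, hg₀] with x hx hgx
    have hv₀ : v x ≠ 0 := (hc.trans_le hx).ne'
    have hb : 1 + β * g₀ x = v x / c := by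
      rw [hgx]
      field_simp
      ring
    rw [hb]
    field_simp
  case lower =>
    rintro t ⟨g, hg₀, hg, rfl, rfl⟩
    calc c * ∫ x, v x ∂μ = 2 * c * ∫ x, v x ∂μ - c ^ 2 * (μ.real univ + β * ∫ x, g x ∂μ) := by
          rw [← hceq]; ring
      _ ≤ _ := integral_sq_div_one_add_mul_ge c hv hg hβ.le hg₀

end

theorem min_boundary_energy_constant_case_general {N : ℕ} (Ω : Set (Euc N)) (β m : ℝ) (hβ : 0 < β)
    (v : Euc N → ℝ) (hv : MemLp v 2 (sm N Ω)) (c : ℝ) (hc : 0 < c)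
    (hvc : ∀ σ ∈ frontier Ω, c ≤ v σ)
    (hceq : c * ((sm N Ω univ).toReal + β * m) = ∫ σ, v σ ∂(sm N Ω)) :
    sInf {t | ∃ g : Euc N → ℝ, (∀ σ, 0 ≤ g σ) ∧ Integrable g (sm N Ω) ∧
        (∫ σ, g σ ∂(sm N Ω)) = m ∧ t = ∫ σ, v σ ^ 2 / (1 + β * g σ) ∂(sm N Ω)} =
      (∫ σ, v σ ∂(sm N Ω)) ^ 2 / ((sm N Ω univ).toReal + β * m) := by
  have hvc' : ∀ᵐ σ ∂(sm N Ω), c ≤ v σ :=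
    (ae_restrict_mem isClosed_frontier.measurableSet).mono hvc
  rw [(isLeast_integral_sq_div_one_add_mul hv hβ hc hvc' hceq).csInf_eq, ← hceq, mul_pow,
    mul_div_assoc, sq (_ + _), mul_self_div_self]
  ring

/-- when `v ≥ c_v` on all of `∂Ω`, the minimal boundary energy equals
`(∫_{∂Ω} v)² / (|∂Ω| + βm)`. -/
theorem min_boundary_energy_constant_case {N : ℕ} (Ω : Set (Euc N)) (hΩo : IsOpen Ω)
    (hΩb : Bornology.IsBounded Ω) (β m : ℝ) (hβ : 0 < β) (hm : 0 < m)
    (v : Euc N → ℝ) (hv : MemLp v 2 (sm N Ω)) (c : ℝ) (hc : 0 < c)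
    (hvc : ∀ σ ∈ frontier Ω, c ≤ v σ)
    (hceq : c * ((sm N Ω univ).toReal + β * m) = ∫ σ, v σ ∂(sm N Ω)) :
    sInf {t | ∃ g : Euc N → ℝ, (∀ σ, 0 ≤ g σ) ∧ Integrable g (sm N Ω) ∧
        (∫ σ, g σ ∂(sm N Ω)) = m ∧ t = ∫ σ, v σ ^ 2 / (1 + β * g σ) ∂(sm N Ω)} =
      (∫ σ, v σ ∂(sm N Ω)) ^ 2 / ((sm N Ω univ).toReal + β * m) :=
  min_boundary_energy_constant_case_general Ω β m hβ v hv c hc hvc hceq
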